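/- Let C be a rectifiable curve in [0,1]^d realizing the optimal TSP path through a finite point set F, and let R2 ⊆ [0,1]^d. Then the length of C ∩ R2 is at least the boundary TSP length T_B(F, R2). -/

import Mathlib

open Metric Set MeasureTheory Filter
open scoped Classical ENNReal BigOperators

noncomputable section

/-- Length of the polygonal path visiting the points of the list in order,
for a (pseudo-)distance function `D`. -/
def pathLen {E : Type*} (D : E → E → ℝ) : List E → ℝ
  | [] => 0
  | [_] => 0
  | a :: b :: l => D a b + pathLen D (b :: l)

/-- Length of a shortest Hamiltonian path through a finite set of points,
for the (pseudo-)distance `D`. -/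
def tspWith {E : Type*} (D : E → E → ℝ) (F : Finset E) : ℝ :=
  sInf {L : ℝ | ∃ l : List E, l.Nodup ∧ l.toFinset = F ∧ pathLen D l = L}

/-- The points of `F` lying in the region `R`. -/
def restr {E : Type*} (F : Finset E) (R : Set E) : Finset E :=
  F.filter (fun x => x ∈ R)

/-- Euclidean TSP length `T(F, R)`: shortest Hamiltonian path through `F ∩ R`. -/
def tsp {E : Type*} [PseudoMetricSpace E] (F : Finset E) (R : Set E) : ℝ :=
  tspWith dist (restr F R)

/-- The boundary pseudo-metric of a region `R`: the Euclidean metric, quotiented so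
that travel along the boundary `∂R` is free. -/
def bMetric {E : Type*} [PseudoMetricSpace E] (R : Set E) (a b : E) : ℝ :=
  min (dist a b) (Metric.infDist a (frontier R) + Metric.infDist b (frontier R))

/-- Boundary TSP length `T_B(F, R)`: shortest Hamiltonian tour on `F ∩ R` for the
boundary pseudo-metric of `R`. -/
def btsp {E : Type*} [PseudoMetricSpace E] (F : Finset E) (R : Set E) : ℝ :=
  tspWith (bMetric R) (restr F R)

/-- The unit hypercube `[0,1]^d`. -/
def unitCube (d : ℕ) : Set (EuclideanSpace ℝ (Fin d)) :=
  {x | ∀ i, x i ∈ Set.Icc (0 : ℝ) 1}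

/-- The closed subcube of edge length `1/m` indexed by `k` in the partition of `[0,1]^d`
into `m^d` congruent subcubes. -/
def subcube (d m : ℕ) (k : Fin d → Fin m) : Set (EuclideanSpace ℝ (Fin d)) :=
  {x | ∀ i, x i ∈ Set.Icc ((k i : ℝ) / m) (((k i : ℝ) + 1) / m)}

/-- The half-open subcube of edge length `1/m` indexed by `k`. -/
def subcubeIco (d m : ℕ) (k : Fin d → Fin m) : Set (EuclideanSpace ℝ (Fin d)) :=
  {x | ∀ i, x i ∈ Set.Ico ((k i : ℝ) / m) (((k i : ℝ) + 1) / m)}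

/-! Order the points of `F ∩ R2` by the time at which `γ` visits them. Between two consecutive
ones, at times `s ≤ t`, the boundary distance is at most `L` times the time `γ` spends in `R2`
during `[s, t)`: either `γ` stays in `R2`, or its first and last visits of `∂R2` cut off an
initial and a final stretch spent in `R2`, long enough at speed `L` to reach `∂R2` from the two
points. Summing over consecutive pairs, this ordering is a tour of `F ∩ R2`
of boundary length at most `L · λ(γ⁻¹(R2))`. -/

open scoped NNReal

theorem pathLen_nonneg {E : Type*} {D : E → E → ℝ} (hD : ∀ a b, 0 ≤ D a b) :
    ∀ l : List E, 0 ≤ pathLen D l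
  | [] => le_rfl
  | [_] => le_rfl
  | a :: b :: l => add_nonneg (hD a b) (pathLen_nonneg hD (b :: l))

theorem pathLen_map {E F : Type*} (D : F → F → ℝ) (f : E → F) :
    ∀ l : List E, pathLen D (l.map f) = pathLen (fun a b => D (f a) (f b)) l
  | [] => rfl
  | [_] => rfl
  | a :: b :: l => congrArg (D (f a) (f b) + ·) (pathLen_map D f (b :: l))

theorem pathLen_cons_le_of_potential {α : Type*} [Preorder α] {D : α → α → ℝ} {S : Set α}
    {V : α → ℝ} (hV : ∀ u ∈ S, 0 ≤ V u)
    (hDV : ∀ u ∈ S, ∀ v ∈ S, u ≤ v → D u v + V v ≤ V u) :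
    ∀ (a : α) (l : List α), (a :: l).Pairwise (· ≤ ·) → (∀ u ∈ a :: l, u ∈ S) →
      pathLen D (a :: l) ≤ V a
  | a, [], _, hS => hV a (hS a List.mem_cons_self)
  | a, b :: l, hl, hS => by
    have hab : a ≤ b := List.rel_of_pairwise_cons hl List.mem_cons_self
    have ih := pathLen_cons_le_of_potential hV hDV b l hl.of_cons
      fun u hu => hS u (List.mem_cons_of_mem a hu)
    calc pathLen D (a :: b :: l) = D a b + pathLen D (b :: l) := rfl
      _ ≤ D a b + V b := by gcongr
      _ ≤ V a := hDV a (hS a List.mem_cons_self) b (hS b (by simp)) hab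

theorem tspWith_nonneg {E : Type*} {D : E → E → ℝ} (hD : ∀ a b, 0 ≤ D a b) (F : Finset E) :
    0 ≤ tspWith D F :=
  Real.sInf_nonneg fun _ ⟨l, _, _, hl⟩ => hl ▸ pathLen_nonneg hD l

theorem tspWith_le_pathLen {E : Type*} {D : E → E → ℝ} (hD : ∀ a b, 0 ≤ D a b) {F : Finset E}
    {l : List E} (hl : l.Nodup) (hlF : ∀ x, x ∈ l ↔ x ∈ F) : tspWith D F ≤ pathLen D l :=
  csInf_le ⟨0, fun _ ⟨l', _, _, hl'⟩ => hl' ▸ pathLen_nonneg hD l'⟩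
    ⟨l, hl, Finset.ext fun x => List.mem_toFinset.trans (hlF x), rfl⟩

theorem bMetric_nonneg {E : Type*} [PseudoMetricSpace E] (R : Set E) (a b : E) :
    0 ≤ bMetric R a b :=
  le_min dist_nonneg (add_nonneg infDist_nonneg infDist_nonneg)

theorem Finset.exists_nodup_mem_iff_pairwise_map_le {α β : Type*} [LinearOrder β]
    (s : Finset α) (f : α → β) :
    ∃ l : List α, l.Nodup ∧ (∀ x, x ∈ l ↔ x ∈ s) ∧ (l.map f).Pairwise (· ≤ ·) := by
  refine ⟨s.toList.mergeSort (fun x y => decide (f x ≤ f y)),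
    (List.mergeSort_perm _ _).nodup_iff.2 s.nodup_toList, by simp, ?_⟩
  refine List.pairwise_map.2 ((List.pairwise_mergeSort ?_ ?_ _).imp (by simp))
  · simpa using fun _ _ _ => le_trans
  · simpa using fun a b => le_total (f a) (f b)

theorem ContinuousOn.exists_first_mem_frontier {E : Type*} [TopologicalSpace E] {R : Set E}
    {γ : ℝ → E} {s r : ℝ} (hsr : s ≤ r) (hγ : ContinuousOn γ (Icc s r)) (hs : γ s ∈ R)
    (hr : γ r ∉ R) : ∃ p ∈ Icc s r, γ p ∈ frontier R ∧ Ico s p ⊆ γ ⁻¹' R := by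
  set B := {u ∈ Icc s r | γ u ∉ R}
  have hBne : B.Nonempty := ⟨r, ⟨hsr, le_rfl⟩, hr⟩
  have hBbdd : BddBelow B := ⟨s, fun u hu => hu.1.1⟩
  have hpB : sInf B ∈ closure B := csInf_mem_closure hBne hBbdd
  have hp : sInf B ∈ Icc s r := isClosed_Icc.closure_subset_iff.2 (fun u hu => hu.1) hpB
  have hsub : Ico s (sInf B) ⊆ γ ⁻¹' R := fun u hu => by
    by_contra huR
    exact (csInf_le hBbdd ⟨⟨hu.1, hu.2.le.trans hp.2⟩, huR⟩).not_gt hu.2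
  refine ⟨sInf B, hp, ?_, hsub⟩
  rw [frontier_eq_closure_inter_closure]
  refine ⟨?_, ((hγ _ hp).mono fun u hu => hu.1).mem_closure hpB fun u hu => hu.2⟩
  rcases hp.1.eq_or_lt with hsp | hsp
  · exact subset_closure (hsp ▸ hs)
  · refine ((hγ _ hp).mono fun u hu => ⟨hu.1, hu.2.le.trans hp.2⟩).mem_closure ?_ hsub
    rw [closure_Ico hsp.ne]
    exact right_mem_Icc.2 hsp.le

theorem ContinuousOn.exists_last_mem_frontier {E : Type*} [TopologicalSpace E] {R : Set E}
    {γ : ℝ → E} {r t : ℝ} (hrt : r ≤ t) (hγ : ContinuousOn γ (Icc r t)) (hr : γ r ∉ R)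
    (ht : γ t ∈ R) : ∃ q ∈ Icc r t, γ q ∈ frontier R ∧ Ioc q t ⊆ γ ⁻¹' R := by
  have hγneg : ContinuousOn (γ ∘ Neg.neg) (Icc (-t) (-r)) :=
    hγ.comp continuousOn_neg fun u hu => ⟨le_neg_of_le_neg hu.2, neg_le.1 hu.1⟩
  obtain ⟨p, hp, hpR, hsub⟩ := hγneg.exists_first_mem_frontier (neg_le_neg hrt)
    (by simpa using ht) (by simpa using hr)
  refine ⟨-p, ⟨le_neg_of_le_neg hp.2, neg_le.1 hp.1⟩, hpR, fun u hu => ?_⟩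
  simpa using hsub (show -u ∈ Ico (-t) p from ⟨neg_le_neg hu.2, neg_lt.1 hu.1⟩)

theorem volume_real_inter_Ico_add {X : Set ℝ} {u v w : ℝ} (huv : u ≤ v) (hvw : v ≤ w) :
    volume.real (X ∩ Ico u v) + volume.real (X ∩ Ico v w) = volume.real (X ∩ Ico u w) := by
  rw [← measureReal_inter_add_sdiff (s := X ∩ Ico u w) measurableSet_Ico
    (measure_inter_ne_top_of_right_ne_top measure_Ico_lt_top.ne)]
  congr 2
  · rw [inter_assoc, Ico_inter_Ico, max_self, min_eq_right hvw]
  · ext x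
    simp only [mem_inter_iff, Set.mem_sdiff, mem_Ico]
    grind

theorem bMetric_le_mul_volume_real {E : Type*} [PseudoMetricSpace E] {R : Set E} {γ : ℝ → E}
    {K : ℝ≥0} {s t : ℝ} (hst : s ≤ t) (hγ : LipschitzOnWith K γ (Icc s t)) (hs : γ s ∈ R)
    (ht : γ t ∈ R) : bMetric R (γ s) (γ t) ≤ K * volume.real (γ ⁻¹' R ∩ Ico s t) := by
  have hdist : ∀ u ∈ Icc s t, ∀ v ∈ Icc s t, u ≤ v → dist (γ u) (γ v) ≤ K * (v - u) :=
    fun u hu v hv huv => by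
      simpa [Real.dist_eq, abs_of_nonpos (sub_nonpos.2 huv)] using hγ.dist_le_mul u hu v hv
  by_cases hstay : Ico s t ⊆ γ ⁻¹' R
  · rw [inter_eq_right.2 hstay, Real.volume_real_Ico_of_le hst]
    exact (min_le_left _ _).trans (hdist s ⟨le_rfl, hst⟩ t ⟨hst, le_rfl⟩ hst)
  obtain ⟨r, hr, hrR⟩ := not_subset.1 hstay
  obtain ⟨p, hp, hpR, hsp⟩ := (hγ.continuousOn.mono (Icc_subset_Icc_right hr.2.le)
    ).exists_first_mem_frontier hr.1 hs hrR
  obtain ⟨q, hq, hqR, hqt⟩ := (hγ.continuousOn.mono (Icc_subset_Icc_left hr.1)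
    ).exists_last_mem_frontier hr.2.le hrR ht
  have hvol : (p - s) + (t - q) ≤ volume.real (γ ⁻¹' R ∩ Ico s t) := by
    have hdisj : Disjoint (Ico s p) (Ioo q t) :=
      disjoint_left.2 fun u hu hu' => by linarith [hu.2, hu'.1, hp.2, hq.1]
    rw [← Real.volume_real_Ico_of_le hp.1, ← Real.volume_real_Ioo_of_le hq.2,
      ← measureReal_union hdisj measurableSet_Ioo measure_Ico_lt_top.ne measure_Ioo_lt_top.ne]
    refine measureReal_mono (union_subset ?_ ?_)
      (measure_inter_ne_top_of_right_ne_top measure_Ico_lt_top.ne)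
    · exact fun u hu => ⟨hsp hu, hu.1, by linarith [hu.2, hp.2, hq.1, hr.2]⟩
    · exact fun u hu => ⟨hqt (Ioo_subset_Ioc_self hu), by linarith [hu.1, hq.1, hr.1], hu.2⟩
  calc bMetric R (γ s) (γ t)
      ≤ infDist (γ s) (frontier R) + infDist (γ t) (frontier R) := min_le_right _ _
    _ ≤ K * (p - s) + K * (t - q) := by
      gcongr
      · exact (infDist_le_dist_of_mem hpR).trans
          (hdist s ⟨le_rfl, hst⟩ p ⟨hp.1, hp.2.trans hr.2.le⟩ hp.1)
      · exact (infDist_le_dist_of_mem hqR).trans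
          (dist_comm (γ t) (γ q) ▸ hdist q ⟨hr.1.trans hq.1, hq.2⟩ t ⟨hst, le_rfl⟩ hq.2)
    _ = K * ((p - s) + (t - q)) := by ring
    _ ≤ K * volume.real (γ ⁻¹' R ∩ Ico s t) := by gcongr

theorem pathLen_bMetric_comp_le_mul_volume_real {E : Type*} [PseudoMetricSpace E] {R : Set E}
    {γ : ℝ → E} {K : ℝ≥0} {a b : ℝ} (hγ : LipschitzOnWith K γ (Icc a b)) {ts : List ℝ}
    (hsorted : ts.Pairwise (· ≤ ·)) (hts : ∀ t ∈ ts, t ∈ Icc a b ∩ γ ⁻¹' R) :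
    pathLen (fun u v => bMetric R (γ u) (γ v)) ts ≤ K * volume.real (γ ⁻¹' R ∩ Ico a b) := by
  rcases ts with _ | ⟨t₀, ts⟩
  · exact mul_nonneg K.coe_nonneg measureReal_nonneg
  have hstep : ∀ u ∈ Icc a b ∩ γ ⁻¹' R, ∀ v ∈ Icc a b ∩ γ ⁻¹' R, u ≤ v →
      bMetric R (γ u) (γ v) + K * volume.real (γ ⁻¹' R ∩ Ico v b) ≤
        K * volume.real (γ ⁻¹' R ∩ Ico u b) := fun u hu v hv huv => by
    rw [← volume_real_inter_Ico_add huv hv.1.2, mul_add]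
    gcongr
    exact bMetric_le_mul_volume_real huv (hγ.mono (Icc_subset_Icc hu.1.1 hv.1.2)) hu.2 hv.2
  calc pathLen (fun u v => bMetric R (γ u) (γ v)) (t₀ :: ts)
      ≤ K * volume.real (γ ⁻¹' R ∩ Ico t₀ b) :=
        pathLen_cons_le_of_potential (fun _ _ => mul_nonneg K.coe_nonneg measureReal_nonneg)
          hstep t₀ ts hsorted hts
    _ ≤ K * volume.real (γ ⁻¹' R ∩ Ico a b) := by
      gcongr
      · exact measure_inter_ne_top_of_right_ne_top measure_Ico_lt_top.ne
      · exact (hts t₀ List.mem_cons_self).1.1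

theorem restricted_tsp_ge_boundary_tsp_general {d : ℕ}
    (F : Finset (EuclideanSpace ℝ (Fin d))) (hF : ∀ x ∈ F, x ∈ unitCube d)
    (R2 : Set (EuclideanSpace ℝ (Fin d)))
    (γ : ℝ → EuclideanSpace ℝ (Fin d)) (L : ℝ)
    (hL : L = tsp F (unitCube d))
    (hlip : LipschitzOnWith (Real.toNNReal L) γ (Set.Icc (0:ℝ) 1))
    (hvisit : ∀ x ∈ restr F (unitCube d), ∃ t ∈ Set.Icc (0:ℝ) 1, γ t = x) :
    btsp F R2 ≤ L * (volume (γ ⁻¹' R2 ∩ Set.Icc (0:ℝ) 1)).toReal := by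
  have hL0 : 0 ≤ L := hL ▸ tspWith_nonneg (fun _ _ => dist_nonneg) _
  set τ := Function.invFunOn γ (Icc (0:ℝ) 1)
  have hτ : ∀ x ∈ restr F R2, τ x ∈ Icc 0 1 ∧ γ (τ x) = x ∧ x ∈ R2 := fun x hx => by
    obtain ⟨hxF, hxR⟩ := Finset.mem_filter.1 hx
    have hvisited := hvisit x (Finset.mem_filter.2 ⟨hxF, hF x hxF⟩)
    exact ⟨Function.invFunOn_mem hvisited, Function.invFunOn_eq hvisited, hxR⟩
  obtain ⟨l, hnodup, hlF, hsorted⟩ := (restr F R2).exists_nodup_mem_iff_pairwise_map_le τ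
  have hγτ : (l.map τ).map γ = l := by
    rw [List.map_map]
    exact (List.map_congr_left fun x hx => (hτ x ((hlF x).1 hx)).2.1).trans l.map_id
  calc btsp F R2 ≤ pathLen (bMetric R2) l := tspWith_le_pathLen (bMetric_nonneg R2) hnodup hlF
    _ = pathLen (fun u v => bMetric R2 (γ u) (γ v)) (l.map τ) := by
      rw [← pathLen_map (bMetric R2) γ, hγτ]
    _ ≤ L.toNNReal * volume.real (γ ⁻¹' R2 ∩ Ico 0 1) := by
      refine pathLen_bMetric_comp_le_mul_volume_real hlip hsorted fun t ht => ?_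
      obtain ⟨x, hx, rfl⟩ := List.mem_map.1 ht
      obtain ⟨hτx, hγτx, hxR⟩ := hτ x ((hlF x).1 hx)
      exact ⟨hτx, show γ (τ x) ∈ R2 by rwa [hγτx]⟩
    _ ≤ L * (volume (γ ⁻¹' R2 ∩ Icc 0 1)).toReal := by
      rw [Real.coe_toNNReal L hL0, ← measureReal_def]
      gcongr
      · exact measure_inter_ne_top_of_right_ne_top measure_Icc_lt_top.ne
      · exact Ico_subset_Icc_self

/-- the length of the portion inside `R2` of an optimal TSP curve
through `F` is at least the boundary TSP length `T_B(F, R2)`. The optimal curve is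
parameterized on `[0,1]` at constant speed `L = T(F, Ω)`, so the length of `C ∩ R2`
is `L · λ(γ⁻¹(R2))`. -/
theorem restricted_tsp_ge_boundary_tsp {d : ℕ} (hd : 2 ≤ d)
    (F : Finset (EuclideanSpace ℝ (Fin d))) (hF : ∀ x ∈ F, x ∈ unitCube d)
    (R2 : Set (EuclideanSpace ℝ (Fin d))) (hR2 : R2 ⊆ unitCube d)
    (γ : ℝ → EuclideanSpace ℝ (Fin d)) (L : ℝ)
    (hL : L = tsp F (unitCube d))
    (hrange : ∀ t ∈ Set.Icc (0:ℝ) 1, γ t ∈ unitCube d)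
    (hlip : LipschitzOnWith (Real.toNNReal L) γ (Set.Icc (0:ℝ) 1))
    (hvisit : ∀ x ∈ restr F (unitCube d), ∃ t ∈ Set.Icc (0:ℝ) 1, γ t = x)
    (hlen : eVariationOn γ (Set.Icc (0:ℝ) 1) = ENNReal.ofReal L) :
    btsp F R2 ≤ L * (volume (γ ⁻¹' R2 ∩ Set.Icc (0:ℝ) 1)).toReal :=
  restricted_tsp_ge_boundary_tsp_general F hF R2 γ L hL hlip hvisit
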